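/- For every 0 < p < ∞ there exists a constant C = C_{n,m,p} such that for all a, b ≥ 1 and all f ∈ L^1(R^{n+m}): ∫_{R^n×R^m} (M^*_{φ,a,b}f)^p dx dy ≤ C (1+a)^n (1+b)^m ∫_{R^n×R^m} (M^*_φ f)^p dx dy. -/

import Mathlib

open MeasureTheory ENNReal

noncomputable section

abbrev Ed (n : ℕ) : Type := EuclideanSpace ℝ (Fin n)

/-- `(φ_{t,s} * f)(x,y)`, convolution on ℝ^{n+m} of the member `φ t s` of the family with `f`. -/
def conv2 (n m : ℕ) (φ : ℝ → ℝ → Ed n × Ed m → ℝ) (f : Ed n × Ed m → ℝ)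
    (t s : ℝ) (x : Ed n) (y : Ed m) : ℝ :=
  ∫ q : Ed n × Ed m, φ t s (x - q.1, y - q.2) * f q

/-- Radial maximal function `M⁺_φ f (x,y) = sup_{t,s>0} |φ_{t,s} * f(x,y)|`. -/
def Mplus (n m : ℕ) (φ : ℝ → ℝ → Ed n × Ed m → ℝ) (f : Ed n × Ed m → ℝ)
    (x : Ed n) (y : Ed m) : ℝ≥0∞ :=
  ⨆ (t : ℝ) (_ : 0 < t) (s : ℝ) (_ : 0 < s), ENNReal.ofReal |conv2 n m φ f t s x y|

/-- Non-tangential maximal function of aperture `(a,b)`: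
`sup |φ_{t,s} * f(x₁,y₁)|` over `|x−x₁| ≤ a t`, `|y−y₁| ≤ b (t+s)`. -/
def MstarAp (n m : ℕ) (φ : ℝ → ℝ → Ed n × Ed m → ℝ) (f : Ed n × Ed m → ℝ)
    (a b : ℝ) (x : Ed n) (y : Ed m) : ℝ≥0∞ :=
  ⨆ (x₁ : Ed n) (y₁ : Ed m) (t : ℝ) (s : ℝ) (_ : 0 < t) (_ : 0 < s)
    (_ : ‖x - x₁‖ ≤ a * t) (_ : ‖y - y₁‖ ≤ b * (t + s)),
    ENNReal.ofReal |conv2 n m φ f t s x₁ y₁|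

/-- Non-tangential maximal function `M^*_φ` (aperture `(1,1)`). -/
def Mstar (n m : ℕ) (φ : ℝ → ℝ → Ed n × Ed m → ℝ) (f : Ed n × Ed m → ℝ)
    (x : Ed n) (y : Ed m) : ℝ≥0∞ :=
  MstarAp n m φ f 1 1 x y

/-- Tangential maximal function
`M^{**}_N f(x,y) = sup_{u,v,t,s>0} |φ_{t,s}*f(x−u,y−v)| (1+|u|/t)^{−N} (1+|v|/(t+s))^{−N}`. -/
def Mtan (n m : ℕ) (φ : ℝ → ℝ → Ed n × Ed m → ℝ) (f : Ed n × Ed m → ℝ)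
    (N : ℝ) (x : Ed n) (y : Ed m) : ℝ≥0∞ :=
  ⨆ (u : Ed n) (v : Ed m) (t : ℝ) (s : ℝ) (_ : 0 < t) (_ : 0 < s),
    ENNReal.ofReal (|conv2 n m φ f t s (x - u) (y - v)|
      * (1 + ‖u‖ / t) ^ (-N) * (1 + ‖v‖ / (t + s)) ^ (-N))

open Metric Set Module

/-! Write `F = M^*_{φ,a,b} f` and `G = M^*_φ f`. Over the parameters `(x₁, y₁, t, s)` with
`|φ_{t,s} * f(x₁, y₁)| > r`, the rectangles `B(x₁, 2at) × B(y₁, 2b(t+s))` cover `{F > r}`, while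
the rectangles `B(x₁, t) × B(y₁, t+s)` lie in `{G > r}`. Vitali's covering lemma, applied in `y`
for fixed `x` and then in `x` for fixed `y`, bounds the measure of the first union by
`(3+4a)^n (3+4b)^m` times that of the second. Summing over the levels with `r^p = 2^k` turns this
comparison into the `L^p` bound; since the unions are open, no measurability of `F` or `G` is
needed. -/

namespace ENNReal

lemma le_two_mul_tsum_zpow_lt (x : ℝ≥0∞) :
    x ≤ 2 * ∑' k : ℤ, if (2 : ℝ≥0∞) ^ k < x then (2 : ℝ≥0∞) ^ k else 0 := by
  rcases eq_or_ne x 0 with rfl | hx0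
  · exact zero_le
  rcases eq_or_ne x ∞ with rfl | hxtop
  · have hdiv : ∑' k : ℕ, (2 : ℝ≥0∞) ^ k = ∞ := by
      simp [ENNReal.tsum_geometric, tsub_eq_zero_of_le one_le_two]
    have hsum : ∑' k : ℕ, (2 : ℝ≥0∞) ^ k ≤
        ∑' k : ℤ, if (2 : ℝ≥0∞) ^ k < ∞ then (2 : ℝ≥0∞) ^ k else 0 := by
      refine le_trans (le_of_eq ?_) (ENNReal.tsum_comp_le_tsum_of_injective Nat.cast_injective _)
      congr with k
      simp
    rw [hdiv, top_le_iff] at hsum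
    simp [hsum]
  obtain ⟨K, hKx, hxK⟩ := exists_mem_Ioc_zpow hx0 hxtop one_lt_two ofNat_ne_top
  calc x ≤ 2 ^ (K + 1) := hxK
    _ = 2 * 2 ^ K := by rw [ENNReal.zpow_add two_ne_zero ofNat_ne_top, zpow_one, mul_comm]
    _ ≤ 2 * ∑' k : ℤ, if (2 : ℝ≥0∞) ^ k < x then (2 : ℝ≥0∞) ^ k else 0 := by
      gcongr
      exact le_trans (le_of_eq (if_pos hKx).symm) (ENNReal.le_tsum K)

lemma tsum_zpow_lt_le_two_mul (x : ℝ≥0∞) :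
    ∑' k : ℤ, (if (2 : ℝ≥0∞) ^ k < x then (2 : ℝ≥0∞) ^ k else 0) ≤ 2 * x := by
  rcases eq_or_ne x 0 with rfl | hx0
  · simp
  rcases eq_or_ne x ∞ with rfl | hxtop
  · simp
  obtain ⟨K, hKx, hxK⟩ := exists_mem_Ioc_zpow hx0 hxtop one_lt_two ofNat_ne_top
  have hle : ∀ k : ℤ, (2 : ℝ≥0∞) ^ k < x → k ≤ K := fun k hk => by
    by_contra! h
    exact (hk.trans_le hxK).not_ge (zpow_le_of_le one_le_two (by omega))
  calc ∑' k : ℤ, (if (2 : ℝ≥0∞) ^ k < x then (2 : ℝ≥0∞) ^ k else 0)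
      = ∑' j : ℕ, (if (2 : ℝ≥0∞) ^ (K - j) < x then (2 : ℝ≥0∞) ^ (K - j) else 0) := by
        refine ((sub_right_injective.comp Nat.cast_injective).tsum_eq ?_).symm
        intro k hk
        have : (2 : ℝ≥0∞) ^ k < x := by by_contra h; simp [h] at hk
        exact ⟨(K - k).toNat, by simp [hle k this]⟩
    _ ≤ ∑' j : ℕ, (2 : ℝ≥0∞) ^ K * 2⁻¹ ^ j := by
        gcongr with j
        split_ifs
        · rw [ENNReal.zpow_sub two_ne_zero ofNat_ne_top]
          simp [ENNReal.inv_pow]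
        · exact zero_le
    _ = 2 * 2 ^ K := by
        rw [ENNReal.tsum_mul_left, ENNReal.tsum_geometric, ENNReal.one_sub_inv_two, inv_inv,
          mul_comm]
    _ ≤ 2 * x := by gcongr

end ENNReal

theorem lintegral_le_four_mul_of_dyadic_superlevel {X : Type*} [MeasurableSpace X]
    {μ : Measure X} {F G : X → ℝ≥0∞} {U V : ℤ → Set X} (hU : ∀ k, MeasurableSet (U k))
    (hV : ∀ k, MeasurableSet (V k)) (hFV : ∀ k, {x | 2 ^ k < F x} ⊆ V k)
    (hUG : ∀ k, U k ⊆ {x | 2 ^ k < G x}) {C : ℝ≥0∞} (hVU : ∀ k, μ (V k) ≤ C * μ (U k)) :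
    ∫⁻ x, F x ∂μ ≤ 4 * C * ∫⁻ x, G x ∂μ := by
  have hF : ∀ x, F x ≤ 2 * ∑' k, (V k).indicator (fun _ => (2 : ℝ≥0∞) ^ k) x := fun x => by
    refine (ENNReal.le_two_mul_tsum_zpow_lt (F x)).trans ?_
    gcongr with k
    split_ifs with h
    · rw [indicator_of_mem (hFV k h)]
    · exact zero_le
  have hG : ∀ x, ∑' k, (U k).indicator (fun _ => (2 : ℝ≥0∞) ^ k) x ≤ 2 * G x := fun x => by
    refine le_trans ?_ (ENNReal.tsum_zpow_lt_le_two_mul (G x))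
    gcongr with k
    by_cases h : x ∈ U k
    · rw [indicator_of_mem h, if_pos (show 2 ^ k < G x from hUG k h)]
    · rw [indicator_of_notMem h]
      exact zero_le
  calc ∫⁻ x, F x ∂μ ≤ ∫⁻ x, 2 * ∑' k, (V k).indicator (fun _ => (2 : ℝ≥0∞) ^ k) x ∂μ :=
        lintegral_mono hF
    _ = 2 * ∑' k, 2 ^ k * μ (V k) := by
        rw [lintegral_const_mul' _ _ ofNat_ne_top,
          lintegral_tsum fun k => (measurable_const.indicator (hV k)).aemeasurable]
        simp only [lintegral_indicator_const (hV _)]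
    _ ≤ 2 * ∑' k, 2 ^ k * (C * μ (U k)) := by gcongr with k; exact hVU k
    _ = 2 * C * ∫⁻ x, ∑' k, (U k).indicator (fun _ => (2 : ℝ≥0∞) ^ k) x ∂μ := by
        rw [lintegral_tsum fun k => (measurable_const.indicator (hU k)).aemeasurable]
        simp only [lintegral_indicator_const (hU _), mul_left_comm _ C, ENNReal.tsum_mul_left,
          mul_assoc]
    _ ≤ 2 * C * ∫⁻ x, 2 * G x ∂μ := by gcongr with x; exact hG x
    _ = 4 * C * ∫⁻ x, G x ∂μ := by
        rw [lintegral_const_mul' _ _ ofNat_ne_top]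
        ring

theorem ball_mul_subset_ball_of_inter_nonempty {α : Type*} [PseudoMetricSpace α] {x y : α}
    {r s κ : ℝ} (hκ : 0 ≤ κ) (hxy : (ball x r ∩ ball y s).Nonempty) (hrs : r ≤ 2 * s) :
    ball x (κ * r) ⊆ ball y ((3 + 2 * κ) * s) := by
  obtain ⟨z, hzx, hzy⟩ := hxy
  intro w hw
  rw [mem_ball] at hw hzx hzy ⊢
  have hκr : κ * r ≤ κ * (2 * s) := mul_le_mul_of_nonneg_left hrs hκ
  calc dist w y ≤ dist w x + dist z x + dist z y := by
        linarith [dist_triangle w x y, dist_triangle_left x y z]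
    _ < (3 + 2 * κ) * s := by linarith

section Covering

variable {E : Type*} [NormedAddCommGroup E] [NormedSpace ℝ E] [FiniteDimensional ℝ E]
  [MeasurableSpace E] [BorelSpace E] (μ : Measure E) [μ.IsAddHaarMeasure]

theorem measure_iUnion_ball_mul_le {ι : Type*} (c : ι → E) {ρ : ι → ℝ} (hρ : ∀ i, 0 < ρ i)
    {S : Set E} (hS : ∀ i, ball (c i) (ρ i) ⊆ S) {κ : ℝ} (hκ : 0 ≤ κ) :
    μ (⋃ i, ball (c i) (κ * ρ i)) ≤ ENNReal.ofReal ((3 + 2 * κ) ^ finrank ℝ E) * μ S := by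
  -- Vitali's lemma needs bounded radii: treat the balls with `ρ i ≤ N` and let `N → ∞`.
  set B : ℕ → Set E := fun N => ⋃ i ∈ {i | ρ i ≤ N}, ball (c i) (κ * ρ i)
  have hB : ⋃ i, ball (c i) (κ * ρ i) = ⋃ N, B N := by
    refine Subset.antisymm (iUnion_subset fun i => ?_) (iUnion_subset fun N =>
      iUnion₂_subset fun i _ => subset_iUnion (fun i => ball (c i) (κ * ρ i)) i)
    obtain ⟨N, hN⟩ := exists_nat_ge (ρ i)
    exact subset_iUnion_of_subset N
      (subset_biUnion_of_mem (u := fun i => ball (c i) (κ * ρ i)) hN)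
  have hBmono : Monotone B := fun N N' h =>
    biUnion_mono (fun i (hi : ρ i ≤ N) => hi.trans (Nat.cast_le.2 h)) fun _ _ => subset_rfl
  rw [hB, hBmono.measure_iUnion]
  refine iSup_le fun N => ?_
  have hne : ∀ i, (ball (c i) (ρ i)).Nonempty := fun i => nonempty_ball.2 (hρ i)
  obtain ⟨u, -, hdisj, hcover⟩ := Vitali.exists_disjoint_subfamily_covering_enlargement
    (fun i => ball (c i) (ρ i)) {i | ρ i ≤ N} ρ 2 one_lt_two (fun i _ => (hρ i).le) N
    (fun _ hi => hi) (fun i _ => hne i)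
  have hu : u.Countable := hdisj.countable_of_isOpen (fun _ _ => isOpen_ball) fun i _ => hne i
  have h3κ : 0 < 3 + 2 * κ := by linarith
  calc μ (B N) ≤ μ (⋃ j ∈ u, ball (c j) ((3 + 2 * κ) * ρ j)) := by
        refine measure_mono (iUnion₂_subset fun i hi => ?_)
        obtain ⟨j, hju, hij, hρij⟩ := hcover i hi
        exact (ball_mul_subset_ball_of_inter_nonempty hκ hij hρij).trans
          (subset_biUnion_of_mem (u := fun j => ball (c j) ((3 + 2 * κ) * ρ j)) hju)
    _ ≤ ∑' j : u, μ (ball (c j) ((3 + 2 * κ) * ρ j)) := measure_biUnion_le μ hu _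
    _ = ENNReal.ofReal ((3 + 2 * κ) ^ finrank ℝ E) * μ (⋃ j ∈ u, ball (c j) (ρ j)) := by
        rw [measure_biUnion hu hdisj fun _ _ => measurableSet_ball, ← ENNReal.tsum_mul_left]
        simp only [Measure.addHaar_ball_mul_of_pos μ _ h3κ, Measure.addHaar_ball_center μ (c _)]
    _ ≤ ENNReal.ofReal ((3 + 2 * κ) ^ finrank ℝ E) * μ S := by
        gcongr
        exact iUnion₂_subset fun j _ => hS j

theorem prod_iUnion_prod_ball_mul_le {X : Type*} [TopologicalSpace X] [MeasurableSpace X]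
    [OpensMeasurableSpace X] (ν : Measure X) {ι : Type*} {A : ι → Set X} (hA : ∀ i, IsOpen (A i))
    (c : ι → E) {ρ : ι → ℝ} (hρ : ∀ i, 0 < ρ i) {κ : ℝ} (hκ : 0 ≤ κ) :
    ν.prod μ (⋃ i, A i ×ˢ ball (c i) (κ * ρ i)) ≤
      ENNReal.ofReal ((3 + 2 * κ) ^ finrank ℝ E) * ν.prod μ (⋃ i, A i ×ˢ ball (c i) (ρ i)) := by
  have hopen : ∀ r : ι → ℝ, IsOpen (⋃ i, A i ×ˢ ball (c i) (r i)) := fun r =>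
    isOpen_iUnion fun i => (hA i).prod isOpen_ball
  rw [Measure.prod_apply (hopen _).measurableSet, Measure.prod_apply (hopen _).measurableSet,
    ← lintegral_const_mul' _ _ ofReal_ne_top]
  refine lintegral_mono fun x => ?_
  have hslice : ∀ r : ι → ℝ,
      Prod.mk x ⁻¹' ⋃ i, A i ×ˢ ball (c i) (r i) = ⋃ i : {i // x ∈ A i}, ball (c i) (r i) := by
    intro r
    ext y
    simp
  simp only [hslice]
  exact measure_iUnion_ball_mul_le μ (fun i : {i // x ∈ A i} => c i) (fun i => hρ i)
    (fun i => subset_iUnion (fun i : {i // x ∈ A i} => ball (c i) (ρ i)) i) hκ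

theorem prod_iUnion_ball_mul_prod_le {Y : Type*} [TopologicalSpace Y] [MeasurableSpace Y]
    [OpensMeasurableSpace Y] (ν : Measure Y) [SFinite ν] {ι : Type*} (c : ι → E) {ρ : ι → ℝ}
    (hρ : ∀ i, 0 < ρ i) {B : ι → Set Y} (hB : ∀ i, IsOpen (B i)) {κ : ℝ} (hκ : 0 ≤ κ) :
    μ.prod ν (⋃ i, ball (c i) (κ * ρ i) ×ˢ B i) ≤
      ENNReal.ofReal ((3 + 2 * κ) ^ finrank ℝ E) * μ.prod ν (⋃ i, ball (c i) (ρ i) ×ˢ B i) := by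
  have hswap : ∀ r : ι → ℝ, μ.prod ν (⋃ i, ball (c i) (r i) ×ˢ B i) =
      ν.prod μ (⋃ i, B i ×ˢ ball (c i) (r i)) := by
    intro r
    rw [← (Measure.measurePreserving_swap).measure_preimage
      (isOpen_iUnion fun i => (hB i).prod isOpen_ball).measurableSet.nullMeasurableSet]
    simp only [preimage_iUnion, preimage_swap_prod]
  rw [hswap, hswap]
  exact prod_iUnion_prod_ball_mul_le μ ν hB c hρ hκ

theorem prod_iUnion_ball_mul_prod_ball_mul_le {F : Type*} [NormedAddCommGroup F]
    [NormedSpace ℝ F] [FiniteDimensional ℝ F] [MeasurableSpace F] [BorelSpace F] (ν : Measure F)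
    [ν.IsAddHaarMeasure] {ι : Type*} (cx : ι → E) (cy : ι → F)
    {ρ σ : ι → ℝ} (hρ : ∀ i, 0 < ρ i) (hσ : ∀ i, 0 < σ i) {α β : ℝ} (hα : 0 ≤ α) (hβ : 0 ≤ β) :
    μ.prod ν (⋃ i, ball (cx i) (α * ρ i) ×ˢ ball (cy i) (β * σ i)) ≤
      ENNReal.ofReal ((3 + 2 * α) ^ finrank ℝ E * (3 + 2 * β) ^ finrank ℝ F) *
        μ.prod ν (⋃ i, ball (cx i) (ρ i) ×ˢ ball (cy i) (σ i)) := by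
  calc μ.prod ν (⋃ i, ball (cx i) (α * ρ i) ×ˢ ball (cy i) (β * σ i))
      ≤ ENNReal.ofReal ((3 + 2 * β) ^ finrank ℝ F) *
          μ.prod ν (⋃ i, ball (cx i) (α * ρ i) ×ˢ ball (cy i) (σ i)) :=
        prod_iUnion_prod_ball_mul_le ν μ (fun _ => isOpen_ball) cy hσ hβ
    _ ≤ ENNReal.ofReal ((3 + 2 * β) ^ finrank ℝ F) *
          (ENNReal.ofReal ((3 + 2 * α) ^ finrank ℝ E) * μ.prod ν (⋃ i, ball (cx i) (ρ i) ×ˢ ball (cy i) (σ i))) := by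
        gcongr
        exact prod_iUnion_ball_mul_prod_le μ ν cx hρ (fun _ => isOpen_ball) hα
    _ = _ := by
        rw [← mul_assoc, ← ENNReal.ofReal_mul (by positivity), mul_comm ((3 + 2 * β) ^ _)]

end Covering

section Tents

variable {n m : ℕ} (φ : ℝ → ℝ → Ed n × Ed m → ℝ) (f : Ed n × Ed m → ℝ)

def convSuperlevelSet (r : ℝ≥0∞) : Set ((Ed n × Ed m) × ℝ × ℝ) :=
  {w | 0 < w.2.1 ∧ 0 < w.2.2 ∧ r < ENNReal.ofReal |conv2 n m φ f w.2.1 w.2.2 w.1.1 w.1.2|}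

def tentUnion (α β : ℝ) (r : ℝ≥0∞) : Set (Ed n × Ed m) :=
  ⋃ w : convSuperlevelSet φ f r,
    ball w.1.1.1 (α * w.1.2.1) ×ˢ ball w.1.1.2 (β * (w.1.2.1 + w.1.2.2))

theorem isOpen_tentUnion (α β : ℝ) (r : ℝ≥0∞) : IsOpen (tentUnion φ f α β r) :=
  isOpen_iUnion fun _ => isOpen_ball.prod isOpen_ball

theorem ofReal_abs_conv2_le_MstarAp {a b t s : ℝ} {x x₁ : Ed n} {y y₁ : Ed m} (ht : 0 < t)
    (hs : 0 < s) (hx : ‖x - x₁‖ ≤ a * t) (hy : ‖y - y₁‖ ≤ b * (t + s)) :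
    ENNReal.ofReal |conv2 n m φ f t s x₁ y₁| ≤ MstarAp n m φ f a b x y :=
  le_iSup_of_le x₁ <| le_iSup_of_le y₁ <| le_iSup_of_le t <| le_iSup_of_le s <|
    le_iSup_of_le ht <| le_iSup_of_le hs <| le_iSup_of_le hx <| le_iSup_of_le hy le_rfl

theorem tentUnion_one_subset (r : ℝ≥0∞) :
    tentUnion φ f 1 1 r ⊆ {q | r < Mstar n m φ f q.1 q.2} := by
  intro q hq
  obtain ⟨⟨⟨⟨x₁, y₁⟩, t, s⟩, ht, hs, hr⟩, hqx, hqy⟩ := mem_iUnion.1 hq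
  rw [mem_ball, dist_eq_norm] at hqx hqy
  exact hr.trans_le (ofReal_abs_conv2_le_MstarAp φ f ht hs hqx.le hqy.le)

theorem setOf_lt_MstarAp_subset_tentUnion {a b : ℝ} (ha : 0 < a) (hb : 0 < b) (r : ℝ≥0∞) :
    {q | r < MstarAp n m φ f a b q.1 q.2} ⊆ tentUnion φ f (2 * a) (2 * b) r := by
  intro q (hq : r < MstarAp n m φ f a b q.1 q.2)
  simp only [MstarAp, lt_iSup_iff] at hq
  obtain ⟨x₁, y₁, t, s, ht, hs, hx, hy, hr⟩ := hq
  refine mem_iUnion.2 ⟨⟨((x₁, y₁), t, s), ht, hs, hr⟩, ?_, ?_⟩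
  · rw [mem_ball, dist_eq_norm]
    nlinarith
  · rw [mem_ball, dist_eq_norm]
    nlinarith

theorem volume_tentUnion_le {α β : ℝ} (hα : 0 ≤ α) (hβ : 0 ≤ β) (r : ℝ≥0∞) :
    volume (tentUnion φ f α β r) ≤
      ENNReal.ofReal ((3 + 2 * α) ^ n * (3 + 2 * β) ^ m) * volume (tentUnion φ f 1 1 r) := by
  have h := prod_iUnion_ball_mul_prod_ball_mul_le (volume : Measure (Ed n))
    (volume : Measure (Ed m)) (fun w : convSuperlevelSet φ f r => w.1.1.1) (fun w => w.1.1.2)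
    (fun w => w.2.1) (fun w => add_pos w.2.1 w.2.2.1) hα hβ
  simpa only [tentUnion, one_mul, finrank_euclideanSpace_fin, Measure.volume_eq_prod] using h

end Tents

theorem statement5_general (n m : ℕ) (p : ℝ) (hp : 0 < p) :
    ∃ C : ℝ, 0 < C ∧
      ∀ (φ : ℝ → ℝ → Ed n × Ed m → ℝ),
        (∀ t s, 0 < t → 0 < s → Integrable (φ t s) volume) →
        ∀ (f : Ed n × Ed m → ℝ), Integrable f volume →
        ∀ (a b : ℝ), 1 ≤ a → 1 ≤ b →
          (∫⁻ q : Ed n × Ed m, (MstarAp n m φ f a b q.1 q.2) ^ p) ≤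
            ENNReal.ofReal (C * (1 + a) ^ n * (1 + b) ^ m) *
              ∫⁻ q : Ed n × Ed m, (Mstar n m φ f q.1 q.2) ^ p := by
  refine ⟨4 * 4 ^ n * 4 ^ m, by positivity, fun φ _ f _ a b ha hb => ?_⟩
  have hlevel : ∀ (k : ℤ) (x : ℝ≥0∞), 2 ^ k < x ^ p ↔ (2 ^ k) ^ p⁻¹ < x := fun k x =>
    (ENNReal.rpow_inv_lt_iff hp).symm
  have hV : ∀ k : ℤ, {q : Ed n × Ed m | 2 ^ k < MstarAp n m φ f a b q.1 q.2 ^ p} ⊆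
      tentUnion φ f (2 * a) (2 * b) ((2 ^ k) ^ p⁻¹) := fun k q hq =>
    setOf_lt_MstarAp_subset_tentUnion φ f (by linarith) (by linarith) _ ((hlevel k _).1 hq)
  have hU : ∀ k : ℤ, tentUnion φ f 1 1 ((2 ^ k) ^ p⁻¹) ⊆
      {q : Ed n × Ed m | 2 ^ k < Mstar n m φ f q.1 q.2 ^ p} := fun k q hq =>
    (hlevel k _).2 (tentUnion_one_subset φ f _ hq)
  have key := lintegral_le_four_mul_of_dyadic_superlevel
    (fun k => (isOpen_tentUnion φ f _ _ _).measurableSet)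
    (fun k => (isOpen_tentUnion φ f _ _ _).measurableSet) hV hU
    (fun k => volume_tentUnion_le φ f (by linarith : (0 : ℝ) ≤ 2 * a) (by linarith) _)
  refine key.trans ?_
  rw [← ENNReal.ofReal_ofNat 4, ← ENNReal.ofReal_mul (by norm_num)]
  gcongr ?_ * _
  refine ENNReal.ofReal_le_ofReal ?_
  calc 4 * ((3 + 2 * (2 * a)) ^ n * (3 + 2 * (2 * b)) ^ m)
      ≤ 4 * ((4 * (1 + a)) ^ n * (4 * (1 + b)) ^ m) := by gcongr <;> linarith
    _ = 4 * 4 ^ n * 4 ^ m * (1 + a) ^ n * (1 + b) ^ m := by rw [mul_pow, mul_pow]; ring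

/-- Aperture comparison for the flag non-tangential maximal function: for every
`0 < p < ∞` there is `C = C(n,m,p)` with
`∫ (M^*_{φ,a,b} f)^p ≤ C (1+a)^n (1+b)^m ∫ (M^*_φ f)^p` for all `a, b ≥ 1`. -/
theorem statement5 (n m : ℕ) (hn : 1 ≤ n) (hm : 1 ≤ m) (p : ℝ) (hp : 0 < p) :
    ∃ C : ℝ, 0 < C ∧
      ∀ (φ : ℝ → ℝ → Ed n × Ed m → ℝ),
        (∀ t s, 0 < t → 0 < s → Integrable (φ t s) volume) →
        ∀ (f : Ed n × Ed m → ℝ), Integrable f volume →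
        ∀ (a b : ℝ), 1 ≤ a → 1 ≤ b →
          (∫⁻ q : Ed n × Ed m, (MstarAp n m φ f a b q.1 q.2) ^ p) ≤
            ENNReal.ofReal (C * (1 + a) ^ n * (1 + b) ^ m) *
              ∫⁻ q : Ed n × Ed m, (Mstar n m φ f q.1 q.2) ^ p :=
  statement5_general n m p hp
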